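/- arXiv:2004.03594 — 4 statements merged into one kernel-verified Lean document; each statement's English description precedes it below -/
import Mathlib

section
/- For every integer n ≥ 2, the Jordan constant of the dicyclic group Dic_{4n} of order 4n equals 2. -/
/-! The cyclic subgroup `⟨a⟩` of `Dic_{4n}` has index `2`, so it is normal and abelian;
intersecting it with any subgroup `H` gives a normal abelian subgroup of `H` of index
dividing `2`. Constant `1` would force the whole group to be abelian, but `a` and `x` do not
commute as soon as `n ≠ 1`. -/

/-- `G` satisfies the Jordan property with constant `d`: every finite subgroup `H` of `G`
contains a normal abelian subgroup of index at most `d` in `H`. -/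
def IsJordanWith (G : Type*) [Group G] (d : ℕ) : Prop :=
  ∀ H : Subgroup G, Finite H →
    ∃ A : Subgroup H, A.Normal ∧ (∀ x y : A, x * y = y * x) ∧ A.index ≤ d

/-- `G` is a Jordan group. -/
def IsJordanGroup (G : Type*) [Group G] : Prop :=
  ∃ d : ℕ, 0 < d ∧ IsJordanWith G d

/-- The Jordan constant of `G`: the minimal `d > 0` witnessing the Jordan property. -/
noncomputable def jordanConstant (G : Type*) [Group G] : ℕ :=
  sInf {d : ℕ | 0 < d ∧ IsJordanWith G d}

section Jordan

variable {G : Type*} [Group G]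

open Subgroup

theorem IsJordanWith.mono {d e : ℕ} (h : IsJordanWith G d) (hde : d ≤ e) : IsJordanWith G e :=
  fun H hH => (h H hH).imp fun _ ⟨hA, hcomm, hind⟩ => ⟨hA, hcomm, hind.trans hde⟩

theorem isJordanWith_of_normal (A : Subgroup G) [A.Normal] [IsMulCommutative A] [A.FiniteIndex]
    {d : ℕ} (hd : A.index ≤ d) : IsJordanWith G d := fun H _ =>
  ⟨A.subgroupOf H, inferInstance, mul_comm',
    (Nat.le_of_dvd (Nat.pos_of_ne_zero FiniteIndex.index_ne_zero)
      (relIndex_dvd_index_of_normal A H)).trans hd⟩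

theorem IsJordanWith.mul_comm_of_one [Finite G] (h : IsJordanWith G 1) (x y : G) :
    x * y = y * x := by
  obtain ⟨A, -, hcomm, hind⟩ := h ⊤ inferInstance
  have hA : A = ⊤ :=
    index_eq_one.mp <| hind.antisymm <| Nat.pos_of_ne_zero A.index_ne_zero_of_finite
  subst hA
  simpa using congr_arg (fun z : (⊤ : Subgroup (⊤ : Subgroup G)) => (z : G))
    (hcomm ⟨⟨x, mem_top x⟩, mem_top _⟩ ⟨⟨y, mem_top y⟩, mem_top _⟩)

theorem jordanConstant_eq_succ {d : ℕ} (h : IsJordanWith G (d + 1)) (h' : ¬ IsJordanWith G d) :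
    jordanConstant G = d + 1 := by
  have hmem : d + 1 ∈ {d : ℕ | 0 < d ∧ IsJordanWith G d} := ⟨d.succ_pos, h⟩
  refine le_antisymm (Nat.sInf_le hmem) (le_csInf ⟨_, hmem⟩ fun e ⟨_, he⟩ => ?_)
  by_contra! hlt
  exact h' (he.mono (Nat.lt_succ_iff.mp hlt))

end Jordan

namespace QuaternionGroup

variable {n : ℕ}

open Subgroup

theorem index_zpowers_a_one [NeZero n] : (zpowers (a 1 : QuaternionGroup n)).index = 2 := by
  have h := (zpowers (a 1 : QuaternionGroup n)).index_mul_card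
  rw [Nat.card_zpowers, orderOf_a_one, Nat.card_eq_fintype_card, card] at h
  exact Nat.eq_of_mul_eq_mul_right (m := 2 * n) (by have := NeZero.pos n; omega) (by rw [h]; ring)

theorem isJordanWith_two [NeZero n] : IsJordanWith (QuaternionGroup n) 2 :=
  have := normal_of_index_eq_two (index_zpowers_a_one (n := n))
  have : (zpowers (a 1 : QuaternionGroup n)).FiniteIndex := ⟨by rw [index_zpowers_a_one]; simp⟩
  isJordanWith_of_normal _ index_zpowers_a_one.le

theorem a_one_mul_xa_zero_ne (hn : n ≠ 1) :
    (a 1 : QuaternionGroup n) * xa 0 ≠ xa 0 * a 1 := by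
  intro h
  rw [a_mul_xa, xa_mul_a, xa.injEq, zero_sub, zero_add] at h
  have h2 : ((2 : ℕ) : ZMod (2 * n)) = 0 := by push_cast; linear_combination -h
  rw [ZMod.natCast_eq_zero_iff] at h2
  obtain rfl : n = 0 := by have := Nat.le_of_dvd two_pos h2; omega
  simp at h2

end QuaternionGroup

/-- For every `n ≥ 2`, the dicyclic group of order `4n` (called `QuaternionGroup n`
in Mathlib) has Jordan constant `2`. -/
theorem jordanConstant_dicyclic (n : ℕ) (hn : 2 ≤ n) :
    jordanConstant (QuaternionGroup n) = 2 := by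
  have : NeZero n := ⟨by omega⟩
  exact jordanConstant_eq_succ QuaternionGroup.isJordanWith_two fun h =>
    QuaternionGroup.a_one_mul_xa_zero_ne (by omega) (h.mul_comm_of_one _ _)
end

section
/- The Jordan constant of the binary tetrahedral group (of order 24) equals 12. -/
open Subgroup

def HasNormalAbelianSubgroupOfIndexLE (K : Type*) [Group K] (d : ℕ) : Prop :=
  ∃ A : Subgroup K, A.Normal ∧ (∀ x y : A, x * y = y * x) ∧ A.index ≤ d

namespace HasNormalAbelianSubgroupOfIndexLE

variable {K L : Type*} [Group K] [Group L] {d : ℕ}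

theorem mono {d' : ℕ} (hd : d ≤ d') (h : HasNormalAbelianSubgroupOfIndexLE K d) :
    HasNormalAbelianSubgroupOfIndexLE K d' :=
  let ⟨A, hN, hA, hi⟩ := h
  ⟨A, hN, hA, hi.trans hd⟩

variable (K) in
theorem card : HasNormalAbelianSubgroupOfIndexLE K (Nat.card K) :=
  ⟨⊥, inferInstance, fun _ _ => Subsingleton.elim _ _, index_bot.le⟩

variable (K) in
theorem index_center :
    HasNormalAbelianSubgroupOfIndexLE K (center K).index :=
  ⟨center K, inferInstance, fun x y => Subtype.ext (mem_center_iff.mp y.2 x), le_rfl⟩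

theorem of_mulEquiv (e : K ≃* L) (h : HasNormalAbelianSubgroupOfIndexLE L d) :
    HasNormalAbelianSubgroupOfIndexLE K d := by
  obtain ⟨A, hN, hA, hi⟩ := h
  refine ⟨A.comap e.toMonoidHom, hN.comap _, fun x y => ?_, ?_⟩
  · have h := congrArg Subtype.val (hA ⟨e x, x.2⟩ ⟨e y, y.2⟩)
    exact Subtype.ext (e.injective (by simpa only [coe_mul, map_mul] using h))
  · rwa [index_comap_of_surjective _ e.surjective]

theorem le_center_of_normal {A : Subgroup K} (hK : ∀ x : K,
    (∀ g : K, g * x * g⁻¹ * x = x * (g * x * g⁻¹)) → x ∈ center K)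
    (hN : A.Normal) (hA : ∀ x y : A, x * y = y * x) : A ≤ center K := fun x hx =>
  hK x fun g => congrArg Subtype.val (hA ⟨_, hN.conj_mem x hx g⟩ ⟨x, hx⟩)

theorem index_center_le [Finite K] (hK : ∀ x : K,
    (∀ g : K, g * x * g⁻¹ * x = x * (g * x * g⁻¹)) → x ∈ center K)
    (h : HasNormalAbelianSubgroupOfIndexLE K d) : (center K).index ≤ d := by
  obtain ⟨A, hN, hA, hi⟩ := h
  have hdvd := index_dvd_of_le (le_center_of_normal hK hN hA)
  exact (Nat.le_of_dvd (Nat.pos_of_ne_zero index_ne_zero_of_finite) hdvd).trans hi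

end HasNormalAbelianSubgroupOfIndexLE

theorem Subgroup.card_mul_two_le_of_ne_top {K : Type*} [Group K] [Finite K] {H : Subgroup K}
    (hH : H ≠ ⊤) : Nat.card H * 2 ≤ Nat.card K := by
  rw [← H.card_mul_index]
  exact Nat.mul_le_mul_left _ (one_lt_index_of_ne_top hH)

section Jordan

variable {G : Type*} [Group G] {d : ℕ}

theorem isJordanWith_of_card_le_of_index_center_le [Finite G]
    (hH : ∀ H : Subgroup G, H ≠ ⊤ → Nat.card H ≤ d) (hZ : (center G).index ≤ d) :
    IsJordanWith G d := by
  intro H _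
  by_cases htop : H = ⊤
  · subst htop
    exact (HasNormalAbelianSubgroupOfIndexLE.index_center G).mono hZ |>.of_mulEquiv topEquiv
  · exact (HasNormalAbelianSubgroupOfIndexLE.card H).mono (hH H htop)

theorem IsJordanWith.index_center_le [Finite G] (hG : ∀ x : G,
    (∀ g : G, g * x * g⁻¹ * x = x * (g * x * g⁻¹)) → x ∈ center G)
    (h : IsJordanWith G d) : (center G).index ≤ d :=
  (HasNormalAbelianSubgroupOfIndexLE.of_mulEquiv topEquiv.symm
    (h ⊤ inferInstance)).index_center_le hG

end Jordan

namespace Matrix.SpecialLinearGroup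

theorem card_fin_two_zmod_three : Nat.card (SpecialLinearGroup (Fin 2) (ZMod 3)) = 24 := by
  rw [Nat.card_eq_fintype_card]
  decide

theorem index_center_fin_two_zmod_three :
    (center (SpecialLinearGroup (Fin 2) (ZMod 3))).index = 12 := by
  have hZ : Nat.card (center (SpecialLinearGroup (Fin 2) (ZMod 3))) = 2 := by
    rw [Nat.card_eq_fintype_card]
    decide
  have := card_mul_index (center (SpecialLinearGroup (Fin 2) (ZMod 3)))
  rw [hZ, card_fin_two_zmod_three] at this
  omega

theorem mem_center_of_commute_conj_fin_two_zmod_three :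
    ∀ x : SpecialLinearGroup (Fin 2) (ZMod 3),
      (∀ g, g * x * g⁻¹ * x = x * (g * x * g⁻¹)) → x ∈ center _ := by
  decide

end Matrix.SpecialLinearGroup

open Matrix.SpecialLinearGroup in
/-- The binary tetrahedral group (isomorphic to `SL(2, F₃)`, of order 24)
has Jordan constant `12`. -/
theorem jordanConstant_binaryTetrahedral :
    jordanConstant (Matrix.SpecialLinearGroup (Fin 2) (ZMod 3)) = 12 := by
  refine IsLeast.csInf_eq ⟨⟨by norm_num, ?upper⟩, fun d ⟨_, hd⟩ => ?lower⟩
  case upper =>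
    refine isJordanWith_of_card_le_of_index_center_le (fun H hH => ?_)
      index_center_fin_two_zmod_three.le
    have := card_mul_two_le_of_ne_top hH
    rw [card_fin_two_zmod_three] at this
    omega
  case lower =>
    exact index_center_fin_two_zmod_three ▸
      hd.index_center_le mem_center_of_commute_conj_fin_two_zmod_three
end

section
/- The Jordan constant of the binary octahedral group (of order 48) equals 24. -/
open Quaternion in
/-- The binary octahedral group, realized as the subgroup of the unit quaternions
generated by `(1 + i)/√2` and `(1 + i + j + k)/2`. -/
noncomputable def binaryOctahedralGroup : Subgroup (unitary (Quaternion ℝ)) :=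
  Subgroup.closure
    {x : unitary (Quaternion ℝ) |
      (x : Quaternion ℝ) = ⟨Real.sqrt 2 / 2, Real.sqrt 2 / 2, 0, 0⟩ ∨
      (x : Quaternion ℝ) = ⟨1 / 2, 1 / 2, 1 / 2, 1 / 2⟩}

/-!
The group is finite of order 48: a finite computation in exact `ℚ(√2)`-coordinates shows that
the 48 words `i ^ a * (-j) ^ b * t ^ c * s ^ d` (with `i = s ^ 2`, `-j = t * s ^ 2 * t ^ 2`) are
distinct and closed under right multiplication by the generators `s`, `t`, so they exhaust the
group. Since `-1 = s ^ 4` is central, the centre has index 24, and every proper subgroup has order at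
most 24; so 24 is a Jordan constant. Conversely, an abelian normal subgroup commutes elementwise
with its conjugates by `s` and `t`. Commuting quaternions have parallel imaginary parts, and the
rotations induced by `s` and `t` have no common axis, so the subgroup lies in `{1, -1}` and has
index at least 24.
-/

section Jordan

variable {G : Type*} [Group G]

theorem isJordanWith_card_div_two [Finite G] (hZ : Nontrivial (Subgroup.center G)) :
    IsJordanWith G (Nat.card G / 2) := by
  intro H _
  refine ⟨(Subgroup.center G).subgroupOf H, Subgroup.instNormalCenter.subgroupOf H,
    fun x y => Subtype.ext (Subtype.ext (Subgroup.mem_center_iff.mp x.2 y.1.1).symm), ?_⟩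
  rw [← Subgroup.relIndex, Nat.le_div_iff_mul_le two_pos]
  by_cases hH : H = ⊤
  · subst hH
    rw [Subgroup.relIndex_top_right, ← Subgroup.card_mul_index (Subgroup.center G), mul_comm]
    exact Nat.mul_le_mul_right _ (Finite.one_lt_card_iff_nontrivial.mpr hZ)
  · calc (Subgroup.center G).relIndex H * 2
        ≤ Nat.card H * H.index :=
          Nat.mul_le_mul (Nat.le_of_dvd Nat.card_pos (Subgroup.relIndex_dvd_card _ _))
            (Subgroup.one_lt_index_of_ne_top hH)
      _ = Nat.card G := H.card_mul_index

theorem card_le_mul_of_isJordanWith [Finite G] {k d : ℕ}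
    (hA : ∀ A : Subgroup G, A.Normal → (∀ x y : A, x * y = y * x) → Nat.card A ≤ k)
    (h : IsJordanWith G d) : Nat.card G ≤ k * d := by
  obtain ⟨A, hN, hC, hi⟩ := h ⊤ inferInstance
  have hsurj : Function.Surjective (⊤ : Subgroup G).subtype := fun g => ⟨⟨g, trivial⟩, rfl⟩
  have hB := hA (A.map (⊤ : Subgroup G).subtype) (hN.map _ hsurj) (by
    rintro ⟨_, a, ha, rfl⟩ ⟨_, b, hb, rfl⟩
    exact Subtype.ext (congrArg (fun x : A => (x : G)) (hC ⟨a, ha⟩ ⟨b, hb⟩)))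
  rw [Subgroup.card_map_of_injective (Subgroup.subtype_injective _)] at hB
  calc Nat.card G = Nat.card (⊤ : Subgroup G) := Subgroup.card_top.symm
    _ = Nat.card A * A.index := A.card_mul_index.symm
    _ ≤ k * d := Nat.mul_le_mul hB hi

end Jordan

theorem Subgroup.closure_subset_of_mul_mem {G : Type*} [Group G] {S T : Set G} (hT : T.Finite)
    (h1 : 1 ∈ T) (hmul : ∀ x ∈ T, ∀ g ∈ S, x * g ∈ T) : (Subgroup.closure S : Set G) ⊆ T := by
  intro x hx
  induction hx using Subgroup.closure_induction_right with
  | one => exact h1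
  | mul_right x _ g hg ih => exact hmul x ih g hg
  | mul_inv_cancel x _ g hg ih =>
    have hbij : Set.BijOn (· * g) T T :=
      (hT.injOn_iff_bijOn_of_mapsTo fun y hy => hmul y hy g hg).mp (mul_left_injective g).injOn
    obtain ⟨y, hy, rfl⟩ := hbij.surjOn ih
    simpa using hy

open Quaternion

instance Quaternion.instDecidableEq {R : Type*} [Zero R] [One R] [Neg R] [DecidableEq R] :
    DecidableEq ℍ[R] := fun x y =>
  decidable_of_iff (x.re = y.re ∧ x.imI = y.imI ∧ x.imJ = y.imJ ∧ x.imK = y.imK)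
    QuaternionAlgebra.ext_iff.symm

namespace Quaternion

section map

variable {R S : Type*} [CommRing R] [CommRing S]

def mapRingHom (f : R →+* S) : ℍ[R] →+* ℍ[S] where
  toFun q := ⟨f q.re, f q.imI, f q.imJ, f q.imK⟩
  map_one' := by ext <;> simp
  map_zero' := by ext <;> simp
  map_add' x y := by ext <;> simp <;> rfl
  map_mul' x y := by
    -- the constructor term has type `ℍ[S,-1,0,-1]`, on which `simp` does not apply `re_mul`
    ext
    · exact (by simp : _ = _).trans (re_mul _ _).symm
    · exact (by simp : _ = _).trans (imI_mul _ _).symm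
    · exact (by simp : _ = _).trans (imJ_mul _ _).symm
    · exact (by simp : _ = _).trans (imK_mul _ _).symm

variable (f : R →+* S) (q : ℍ[R])

@[simp] theorem mapRingHom_re : (mapRingHom f q).re = f q.re := rfl
@[simp] theorem mapRingHom_imI : (mapRingHom f q).imI = f q.imI := rfl
@[simp] theorem mapRingHom_imJ : (mapRingHom f q).imJ = f q.imJ := rfl
@[simp] theorem mapRingHom_imK : (mapRingHom f q).imK = f q.imK := rfl

theorem mapRingHom_star : mapRingHom f (star q) = star (mapRingHom f q) := by
  ext <;> simp

theorem mapRingHom_injective {f : R →+* S} (hf : Function.Injective f) :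
    Function.Injective (mapRingHom f) := fun _ _ h =>
  Quaternion.ext _ _ (hf congr(($h).re)) (hf congr(($h).imI)) (hf congr(($h).imJ))
    (hf congr(($h).imK))

end map

theorem im_eq_zero_of_commute_conj {w s t : ℍ[ℝ]} (hs : s = ⟨√2 / 2, √2 / 2, 0, 0⟩)
    (ht : t = ⟨1 / 2, 1 / 2, 1 / 2, 1 / 2⟩) (hws : Commute w (s * w * star s))
    (hwt : Commute w (t * w * star t)) : w.im = 0 := by
  obtain ⟨hs0, hs1, hs2, hs3⟩ := Quaternion.ext_iff.mp hs
  obtain ⟨ht0, ht1, ht2, ht3⟩ := Quaternion.ext_iff.mp ht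
  -- For `w = a + b i + c j + d k`, the `i`-part of the first commutator is `2 (c ^ 2 + d ^ 2)`
  -- and the `k`-part of the second is `2 (b ^ 2 - c d)`.
  have es := congrArg QuaternionAlgebra.imI hws.eq
  have et := congrArg QuaternionAlgebra.imK hwt.eq
  simp only [re_mul, imI_mul, imJ_mul, imK_mul, re_star, imI_star, imJ_star, imK_star, hs0, hs1,
    hs2, hs3, ht0, ht1, ht2, ht3] at es et
  ring_nf at es et
  rw [Real.sq_sqrt zero_le_two] at es
  have hJ : w.imJ = 0 := by nlinarith
  have hK : w.imK = 0 := by nlinarith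
  have hI : w.imI = 0 := by nlinarith
  ext <;> simp [hI, hJ, hK]

theorem eq_one_or_eq_neg_one_of_im_eq_zero {w : ℍ[ℝ]} (hw : w ∈ unitary ℍ[ℝ]) (him : w.im = 0) :
    w = 1 ∨ w = -1 := by
  have hre : w = (w.re : ℍ[ℝ]) := by rw [← re_add_im w, him, add_zero, re_coe]
  have h1 : normSq w = 1 := by
    have := Unitary.star_mul_self_of_mem hw
    rw [star_mul_self, ← coe_one] at this
    exact coe_injective this
  rw [hre, normSq_coe, sq_eq_one_iff] at h1
  rcases h1 with h | h
  · left; rw [hre, h, coe_one]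
  · right; rw [hre, h, coe_neg, coe_one]

end Quaternion

abbrev QSqrtTwo := QuadraticAlgebra ℚ 2 0

-- `2` is not a rational square, so `QSqrtTwo` is a field and `QSqrtTwo.toReal` is injective.
instance : Fact (∀ r : ℚ, r ^ 2 ≠ 2 + 0 * r) := ⟨fun r hr => by
  have hr' : (r : ℝ) ^ 2 = 2 := by exact_mod_cast (by simpa using hr : r ^ 2 = 2)
  refine irrational_sqrt_two.ne_rat |r| ?_
  rw [← hr', Real.sqrt_sq_eq_abs]
  push_cast
  rfl⟩

noncomputable def QSqrtTwo.toReal : QSqrtTwo →+* ℝ :=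
  (QuadraticAlgebra.lift ⟨√2, by simp⟩ : QSqrtTwo →ₐ[ℚ] ℝ).toRingHom

theorem QSqrtTwo.toReal_apply (z : QSqrtTwo) : toReal z = z.re + z.im * √2 := by
  simp [toReal, Rat.smul_def]

namespace BinaryOctahedral

-- With `i = s ^ 2` and `-j = t * s ^ 2 * t ^ 2`, the first two factors run over `Q₈`, and `t ^ c`,
-- `s ^ d` over coset representatives of `Q₈` in the binary tetrahedral group and of the latter in
-- the binary octahedral group.
def word {M : Type*} [Monoid M] (s t : M) (e : Fin 4 × Fin 2 × Fin 3 × Fin 2) : M :=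
  s ^ (2 * (e.1 : ℕ)) * (t * s ^ 2 * t ^ 2) ^ (e.2.1 : ℕ) * t ^ (e.2.2.1 : ℕ) * s ^ (e.2.2.2 : ℕ)

theorem map_word {M N : Type*} [Monoid M] [Monoid N] (f : M →* N) (s t : M)
    (e : Fin 4 × Fin 2 × Fin 3 × Fin 2) : f (word s t e) = word (f s) (f t) e := by
  simp [word]

theorem word_zero {M : Type*} [Monoid M] (s t : M) : word s t 0 = 1 := by
  simp [word]

theorem word_mem {G : Type*} [Group G] {H : Subgroup G} {s t : G} (hs : s ∈ H) (ht : t ∈ H)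
    (e : Fin 4 × Fin 2 × Fin 3 × Fin 2) : word s t e ∈ H := by
  have hj : t * s ^ 2 * t ^ 2 ∈ H := H.mul_mem (H.mul_mem ht (H.pow_mem hs 2)) (H.pow_mem ht 2)
  exact H.mul_mem (H.mul_mem (H.mul_mem (H.pow_mem hs _) (H.pow_mem hj _)) (H.pow_mem ht _))
    (H.pow_mem hs _)

def sQ : ℍ[QSqrtTwo] := ⟨⟨0, 1 / 2⟩, ⟨0, 1 / 2⟩, 0, 0⟩
def tQ : ℍ[QSqrtTwo] := ⟨⟨1 / 2, 0⟩, ⟨1 / 2, 0⟩, ⟨1 / 2, 0⟩, ⟨1 / 2, 0⟩⟩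

-- Rational arithmetic is irreducible for the elaborator, hence `decide +kernel`.
theorem sQ_mem_unitary : sQ ∈ unitary ℍ[QSqrtTwo] := by
  rw [Unitary.mem_iff]; decide +kernel

theorem tQ_mem_unitary : tQ ∈ unitary ℍ[QSqrtTwo] := by
  rw [Unitary.mem_iff]; decide +kernel

theorem sQ_pow_four : sQ ^ 4 = -1 := by decide +kernel

theorem word_sQ_tQ_injective : Function.Injective (word sQ tQ) := by decide +kernel

theorem exists_word_sQ_tQ_mul (e : Fin 4 × Fin 2 × Fin 3 × Fin 2) :
    (∃ e', word sQ tQ e * sQ = word sQ tQ e') ∧ ∃ e', word sQ tQ e * tQ = word sQ tQ e' := by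
  revert e; decide +kernel

noncomputable abbrev embed : ℍ[QSqrtTwo] →+* ℍ[ℝ] := mapRingHom QSqrtTwo.toReal

theorem embed_mem_unitary {q : ℍ[QSqrtTwo]} (hq : q ∈ unitary ℍ[QSqrtTwo]) :
    embed q ∈ unitary ℍ[ℝ] := by
  rw [Unitary.mem_iff, ← mapRingHom_star, ← map_mul, ← map_mul, Unitary.star_mul_self_of_mem hq,
    Unitary.mul_star_self_of_mem hq, map_one]
  exact ⟨rfl, rfl⟩

noncomputable def genS : unitary ℍ[ℝ] := ⟨embed sQ, embed_mem_unitary sQ_mem_unitary⟩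
noncomputable def genT : unitary ℍ[ℝ] := ⟨embed tQ, embed_mem_unitary tQ_mem_unitary⟩

theorem coe_genS : (genS : ℍ[ℝ]) = ⟨√2 / 2, √2 / 2, 0, 0⟩ := by
  ext <;> simp [genS, QSqrtTwo.toReal_apply] <;> simp [sQ] <;> ring

theorem coe_genT : (genT : ℍ[ℝ]) = ⟨1 / 2, 1 / 2, 1 / 2, 1 / 2⟩ := by
  ext <;> simp [genT, QSqrtTwo.toReal_apply] <;> simp [tQ]

theorem genS_mem : genS ∈ binaryOctahedralGroup := Subgroup.subset_closure (Or.inl coe_genS)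
theorem genT_mem : genT ∈ binaryOctahedralGroup := Subgroup.subset_closure (Or.inr coe_genT)

theorem coe_word (e : Fin 4 × Fin 2 × Fin 3 × Fin 2) :
    ((word genS genT e : unitary ℍ[ℝ]) : ℍ[ℝ]) = embed (word sQ tQ e) :=
  (map_word (unitary ℍ[ℝ]).subtype genS genT e).trans
    (map_word (embed : ℍ[QSqrtTwo] →* ℍ[ℝ]) sQ tQ e).symm

theorem word_genS_genT_injective : Function.Injective (word genS genT) := fun e e' h =>
  word_sQ_tQ_injective <| mapRingHom_injective QSqrtTwo.toReal.injective <| by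
    rw [← coe_word, ← coe_word, h]

theorem word_mul_mem_range {g : unitary ℍ[ℝ]} {gQ : ℍ[QSqrtTwo]} (hg : (g : ℍ[ℝ]) = embed gQ)
    {e : Fin 4 × Fin 2 × Fin 3 × Fin 2} (he : ∃ e', word sQ tQ e * gQ = word sQ tQ e') :
    word genS genT e * g ∈ Set.range (word genS genT) := by
  obtain ⟨e', he'⟩ := he
  exact ⟨e', Subtype.ext (by rw [Submonoid.coe_mul, coe_word, coe_word, hg, ← map_mul, he'])⟩

theorem range_word_genS_genT :
    Set.range (word genS genT) = (binaryOctahedralGroup : Set (unitary ℍ[ℝ])) := by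
  refine subset_antisymm (Set.range_subset_iff.mpr (word_mem genS_mem genT_mem)) ?_
  refine Subgroup.closure_subset_of_mul_mem (Set.finite_range _) ⟨0, word_zero _ _⟩ ?_
  rintro _ ⟨e, rfl⟩ g (hg | hg)
  · exact word_mul_mem_range (hg.trans coe_genS.symm) (exists_word_sQ_tQ_mul e).1
  · exact word_mul_mem_range (hg.trans coe_genT.symm) (exists_word_sQ_tQ_mul e).2

theorem card_binaryOctahedralGroup : Nat.card binaryOctahedralGroup = 48 := by
  rw [← SetLike.coe_sort_coe, ← range_word_genS_genT,
    Nat.card_range_of_injective word_genS_genT_injective]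
  simp

instance : Finite binaryOctahedralGroup :=
  Nat.finite_of_card_ne_zero (by rw [card_binaryOctahedralGroup]; norm_num)

theorem coe_genS_pow_four : ((genS ^ 4 : unitary ℍ[ℝ]) : ℍ[ℝ]) = -1 := by
  rw [SubmonoidClass.coe_pow]
  change embed sQ ^ 4 = -1
  rw [← map_pow, sQ_pow_four, map_neg, map_one]

theorem nontrivial_center : Nontrivial (Subgroup.center binaryOctahedralGroup) := by
  let z : binaryOctahedralGroup := ⟨genS ^ 4, pow_mem genS_mem 4⟩
  have hz : ((z : unitary ℍ[ℝ]) : ℍ[ℝ]) = -1 := coe_genS_pow_four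
  refine nontrivial_of_ne ⟨z, Subgroup.mem_center_iff.mpr fun g => ?_⟩ 1 fun h => ?_
  · ext1; ext1
    simp [hz]
  · have := congrArg (fun x : Subgroup.center _ => ((x : binaryOctahedralGroup) : ℍ[ℝ]).re) h
    norm_num [hz] at this

theorem coe_eq_one_or_eq_neg_one_of_normal {A : Subgroup binaryOctahedralGroup} (hN : A.Normal)
    (hC : ∀ x y : A, x * y = y * x) {a : binaryOctahedralGroup} (ha : a ∈ A) :
    ((a : unitary ℍ[ℝ]) : ℍ[ℝ]) = 1 ∨ ((a : unitary ℍ[ℝ]) : ℍ[ℝ]) = -1 := by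
  have hcomm {g : unitary ℍ[ℝ]} (hg : g ∈ binaryOctahedralGroup) :
      Commute ((a : unitary ℍ[ℝ]) : ℍ[ℝ]) (g * a * star (g : ℍ[ℝ])) := by
    have h := congrArg (fun x : A => (((x : binaryOctahedralGroup) : unitary ℍ[ℝ]) : ℍ[ℝ]))
      (hC ⟨a, ha⟩ ⟨_, hN.conj_mem a ha ⟨g, hg⟩⟩)
    simpa [Commute, SemiconjBy, ← Unitary.star_eq_inv, Unitary.coe_star] using h
  exact eq_one_or_eq_neg_one_of_im_eq_zero (a : unitary ℍ[ℝ]).2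
    (im_eq_zero_of_commute_conj coe_genS coe_genT (hcomm genS_mem) (hcomm genT_mem))

theorem card_le_two_of_normal {A : Subgroup binaryOctahedralGroup} (hN : A.Normal)
    (hC : ∀ x y : A, x * y = y * x) : Nat.card A ≤ 2 := by
  let f : A → ({1, -1} : Set ℍ[ℝ]) := fun a =>
    ⟨((a : binaryOctahedralGroup) : unitary ℍ[ℝ]), coe_eq_one_or_eq_neg_one_of_normal hN hC a.2⟩
  have hf : Function.Injective f := fun _ _ h => by
    have h' := congrArg Subtype.val h
    exact Subtype.val_injective <| Subtype.val_injective <| Subtype.val_injective h'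
  calc Nat.card A ≤ Nat.card ({1, -1} : Set ℍ[ℝ]) := Nat.card_le_card_of_injective f hf
    _ ≤ 2 := by rw [Nat.card_coe_set_eq]; exact (Set.ncard_insert_le _ _).trans (by simp)

end BinaryOctahedral

open BinaryOctahedral

/-- The binary octahedral group (of order 48) has Jordan constant `24`. -/
theorem jordanConstant_binaryOctahedral :
    Nat.card binaryOctahedralGroup = 48 ∧ jordanConstant binaryOctahedralGroup = 24 := by
  refine ⟨card_binaryOctahedralGroup, IsLeast.csInf_eq ⟨⟨by norm_num, ?_⟩, fun d hd => ?_⟩⟩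
  · simpa [card_binaryOctahedralGroup] using isJordanWith_card_div_two nontrivial_center
  · have := card_le_mul_of_isJordanWith (fun A hN hC => card_le_two_of_normal hN hC) hd.2
    rw [card_binaryOctahedralGroup] at this
    omega
end

section
/- The Jordan constant of the binary icosahedral group (of order 120) equals 60. -/
set_option synthInstance.maxHeartbeats 1000000
set_option maxHeartbeats 1000000


local notation "G5" => Matrix.SpecialLinearGroup (Fin 2) (ZMod 5)

instance : DecidableEq (Matrix.SpecialLinearGroup (Fin 2) (ZMod 5)) :=
  fun a b => decidable_of_iff (a.1 = b.1) Subtype.ext_iff.symm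

def zz : Matrix.SpecialLinearGroup (Fin 2) (ZMod 5) := ⟨!![4,0;0,4], by decide⟩

set_option maxHeartbeats 4000000 in
set_option maxRecDepth 100000 in
lemma cardG : Nat.card G5 = 120 := by
  rw [Nat.card_eq_fintype_card]; decide

lemma zz_ne_one : zz ≠ 1 := by decide

lemma zz_sq : zz ^ 2 = 1 := by decide

set_option maxHeartbeats 4000000 in
set_option maxRecDepth 100000 in
lemma zz_central : ∀ g : G5, g * zz = zz * g := by decide

set_option maxHeartbeats 16000000 in
set_option maxRecDepth 1000000 in
lemma key : ∀ x : G5, x = 1 ∨ x = zz ∨ ∃ g : G5, (g*x*g⁻¹)*x ≠ x*(g*x*g⁻¹) := by decide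

lemma order_zz : orderOf zz = 2 := orderOf_eq_prime zz_sq zz_ne_one

lemma card_zpowers_zz : Nat.card (Subgroup.zpowers zz) = 2 := by
  rw [Nat.card_zpowers, order_zz]

lemma index_zpowers_zz : (Subgroup.zpowers zz).index = 60 := by
  have h := (Subgroup.zpowers zz).card_mul_index
  rw [card_zpowers_zz, cardG] at h
  omega

lemma zpowers_zz_normal : (Subgroup.zpowers zz).Normal := by
  constructor
  rintro n ⟨k, rfl⟩ g
  have hc : Commute g zz := zz_central g
  have : g * zz ^ k * g⁻¹ = zz ^ k := by
    rw [(hc.zpow_right k).eq, mul_assoc, mul_inv_cancel, mul_one]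
  rw [this]
  exact ⟨k, rfl⟩

lemma upper : IsJordanWith G5 60 := by
  intro H _
  by_cases h : H = ⊤
  · subst h
    refine ⟨(Subgroup.zpowers zz).comap (⊤ : Subgroup G5).subtype, ?_, ?_, ?_⟩
    · exact zpowers_zz_normal.comap _
    · rintro ⟨⟨x, hx⟩, k, hk⟩ ⟨⟨y, hy⟩, l, hl⟩
      refine Subtype.ext (Subtype.ext ?_)
      simp only [Subgroup.comap, Subgroup.subtype] at hk hl
      have hx' : x = zz ^ k := hk.symm
      have hy' : y = zz ^ l := hl.symm
      show x * y = y * x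
      rw [hx', hy', ← zpow_add, ← zpow_add, add_comm]
    · have hs : Function.Surjective (⊤ : Subgroup G5).subtype :=
        fun g => ⟨⟨g, trivial⟩, rfl⟩
      rw [Subgroup.index_comap_of_surjective _ hs, index_zpowers_zz]
  · refine ⟨⊥, inferInstance, ?_, ?_⟩
    · rintro ⟨x, hx⟩ ⟨y, hy⟩
      simp [Subgroup.mem_bot] at hx hy
      subst hx; subst hy; simp
    · rw [Subgroup.index_bot]
      have h1 := H.index_mul_card
      rw [cardG] at h1
      have h2 : H.index ≠ 1 := fun hc => h (Subgroup.index_eq_one.mp hc)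
      have h3 : H.index ≠ 0 := Subgroup.index_ne_zero_of_finite
      have h4 : 2 ≤ H.index := by omega
      have h5 : 2 * Nat.card H ≤ H.index * Nat.card H := Nat.mul_le_mul_right _ h4
      omega

lemma lower (d : ℕ) (hd : IsJordanWith G5 d) : 60 ≤ d := by
  obtain ⟨A, hnorm, hab, hidx⟩ := hd ⊤ inferInstance
  -- show A ≤ comap of zpowers zz
  have hle : A.map (⊤ : Subgroup G5).subtype ≤ Subgroup.zpowers zz := by
    rintro x hx
    rw [Subgroup.mem_map] at hx
    obtain ⟨a, ha, rfl⟩ := hx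
    rcases key ((⊤ : Subgroup G5).subtype a) with h1 | h2 | ⟨g, hg⟩
    · rw [h1]; exact one_mem _
    · rw [h2]; exact Subgroup.mem_zpowers _
    · exfalso
      apply hg
      set g' : (⊤ : Subgroup G5) := ⟨g, trivial⟩ with hg'
      have hconj : g' * a * g'⁻¹ ∈ A := hnorm.conj_mem a ha g'
      have := hab ⟨g' * a * g'⁻¹, hconj⟩ ⟨a, ha⟩
      have := congrArg (fun t : A => ((t : (⊤ : Subgroup G5)) : G5)) this
      simpa using this
  have hcardA : Nat.card A ≤ 2 := by
    have e := Subgroup.equivMapOfInjective A (⊤ : Subgroup G5).subtype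
      (Subgroup.subtype_injective _)
    rw [Nat.card_congr e.toEquiv]
    calc Nat.card (A.map (⊤ : Subgroup G5).subtype) ≤ Nat.card (Subgroup.zpowers zz) :=
          Subgroup.card_le_of_le hle
      _ = 2 := card_zpowers_zz
  have hmul := A.card_mul_index
  have hcT : Nat.card (⊤ : Subgroup G5) = 120 := by rw [Subgroup.card_top, cardG]
  rw [hcT] at hmul
  have hpos : 0 < Nat.card A := Nat.card_pos
  interval_cases h : Nat.card A <;> omega

/-- The binary icosahedral group (isomorphic to `SL(2, F₅)`, of order 120)
has Jordan constant `60`. -/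
theorem jordanConstant_binaryIcosahedral :
    jordanConstant (Matrix.SpecialLinearGroup (Fin 2) (ZMod 5)) = 60 := by
  have hmem : 60 ∈ {d : ℕ | 0 < d ∧ IsJordanWith (Matrix.SpecialLinearGroup (Fin 2) (ZMod 5)) d} :=
    ⟨by norm_num, upper⟩
  refine le_antisymm (Nat.sInf_le hmem) (le_csInf ⟨60, hmem⟩ ?_)
  rintro d ⟨-, hd⟩
  exact lower d hd
end
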